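/- Let (G,κ) be a capacitated graph with κ(x) ≤ d_G(x) for all x. All DP-Nash subgraphs of (G,κ) have the same D-set if and only if X ∪ Z is independent in G and for every nonempty W ⊆ Y^{κ>0} one has |L(W)| > |W^κ|. -/

import Mathlib

/-!
If `X ∪ Z` is independent, every DP-Nash subgraph has `D = X ∪ Z`. Indeed, for
`W = D ∩ Y^{κ>0}` a vertex of `L(W)` has too many neighbours in `D` to be in `D` itself, so it
lies in `P` and its `D`-neighbours, which must be in `Y`, lie in `W`; hence `|L(W)| ≤ |W^κ|`,
and `O*` forces `W = ∅`.

Conversely, there is a DP-Nash subgraph with any vertex `v` in `D` and any `κ(v)` of its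
neighbours, including all tight ones, in `P`: isolate these vertices, solve the rest with the
capacities cut down to the new degrees (induction on the graph), and restore the lost capacity
with edges into the chosen neighbours. This separates the ends of an edge inside `X ∪ Z` (one
of them has positive capacity), and a vertex of `Y^{κ>0}` with at most `κ` tight neighbours
from such a neighbour. Otherwise take a set `W` violating `O*` of maximal deficiency
`|W^κ| - |L(W)|`, and then of maximal size. Maximality yields Hall's condition for covering
`L(W)` from `W` with capacities `κ`, and gives every other vertex of `Y^{κ>0}` a neighbour in
`(X ∪ Z) \ L(W)` that needs all its edges outside `W`. Together these produce a DP-Nash subgraph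
with `W ⊆ D`, unlike the one with `D = X ∪ Z`.
-/

open Finset
open scoped Classical

noncomputable section

variable {V : Type*} [Fintype V]

/-- Degree of a vertex in a (simple) graph on a finite vertex set. -/
def deg (H : SimpleGraph V) (x : V) : ℕ :=
  (Finset.univ.filter fun y => H.Adj x y).card

/-- `(D, P; H)` is a DP-Nash subgraph of the capacitated graph `(G, κ)`:
`H` is a spanning subgraph of `G`, bipartite with partite sets `D` and `P`,
no vertex of `P` is isolated in `H`, and every `x ∈ D` has
`H`-degree `min (d_G x) (κ x)`. -/
def IsDPNash (G : SimpleGraph V) (κ : V → ℕ) (D P : Finset V) (H : SimpleGraph V) : Prop :=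
  H ≤ G ∧ D ∪ P = Finset.univ ∧ Disjoint D P ∧
    (∀ ⦃u v⦄, H.Adj u v → (u ∈ D ∧ v ∈ P) ∨ (u ∈ P ∧ v ∈ D)) ∧
    (∀ v ∈ P, 0 < deg H v) ∧
    (∀ x ∈ D, deg H x = min (deg G x) (κ x))

/-- `X = {x : κ(x) = d_G(x)}`. -/
def XX (G : SimpleGraph V) (κ : V → ℕ) : Finset V :=
  Finset.univ.filter fun x => κ x = deg G x

/-- `Y = N(X) \ X`. -/
def YY (G : SimpleGraph V) (κ : V → ℕ) : Finset V :=
  Finset.univ.filter fun y => y ∉ XX G κ ∧ ∃ x ∈ XX G κ, G.Adj x y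

/-- `Z = V \ (X ∪ Y)`. -/
def ZZ (G : SimpleGraph V) (κ : V → ℕ) : Finset V :=
  Finset.univ \ (XX G κ ∪ YY G κ)

/-- `Y^{κ>0} = {y ∈ Y : κ(y) > 0}`. -/
def Ypos (G : SimpleGraph V) (κ : V → ℕ) : Finset V :=
  (YY G κ).filter fun y => 0 < κ y

/-- The neighbours of `x` in `G` lying in `W`. -/
def nbrW (G : SimpleGraph V) (x : V) (W : Finset V) : Finset V :=
  Finset.univ.filter fun y => G.Adj x y ∧ y ∈ W

/-- `L(W) = {x ∈ X ∪ Z : |N_G(x) ∩ W| > d_G(x) - κ(x)}`. -/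
def LL (G : SimpleGraph V) (κ : V → ℕ) (W : Finset V) : Finset V :=
  (XX G κ ∪ ZZ G κ).filter fun x => deg G x - κ x < (nbrW G x W).card

lemma deg_eq_card_neighborFinset (G : SimpleGraph V) (v : V) :
    deg G v = #(G.neighborFinset v) := by
  rw [G.neighborFinset_eq_filter]
  rfl

lemma nbrW_eq (G : SimpleGraph V) (x : V) (W : Finset V) :
    nbrW G x W = G.neighborFinset x ∩ W := by
  ext
  simp [nbrW]

section Partition

variable {G : SimpleGraph V} {κ : V → ℕ}

lemma mem_XX {x : V} : x ∈ XX G κ ↔ κ x = deg G x := by simp [XX]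

lemma mem_YY {y : V} : y ∈ YY G κ ↔ y ∉ XX G κ ∧ ∃ x ∈ XX G κ, G.Adj x y := by simp [YY]

lemma mem_Ypos {y : V} : y ∈ Ypos G κ ↔ y ∈ YY G κ ∧ 0 < κ y := by simp [Ypos]

lemma mem_XX_union_ZZ {v : V} : v ∈ XX G κ ∪ ZZ G κ ↔ v ∉ YY G κ := by
  have : v ∈ XX G κ → v ∉ YY G κ := fun hX hY => (mem_YY.1 hY).1 hX
  simp only [ZZ, mem_union, mem_sdiff, mem_univ, true_and]
  tauto

lemma mem_LL {W : Finset V} {x : V} :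
    x ∈ LL G κ W ↔ x ∈ XX G κ ∪ ZZ G κ ∧ deg G x - κ x < #(G.neighborFinset x ∩ W) := by
  rw [LL, mem_filter, nbrW_eq]

lemma LL_mono {A B : Finset V} (h : A ⊆ B) : LL G κ A ⊆ LL G κ B := fun x hx => by
  rw [mem_LL] at hx ⊢
  exact ⟨hx.1, hx.2.trans_le (card_le_card (inter_subset_inter subset_rfl h))⟩

lemma LL_empty : LL G κ ∅ = ∅ := by
  ext x
  simp [mem_LL]

lemma mem_LL_of_mem_XX {W : Finset V} {x w : V} (hx : x ∈ XX G κ) (hw : w ∈ W)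
    (hxw : G.Adj x w) : x ∈ LL G κ W := by
  rw [mem_LL, mem_XX.1 hx, Nat.sub_self, card_pos]
  exact ⟨mem_union_left _ hx, w, mem_inter.2 ⟨(G.mem_neighborFinset _ _).2 hxw, hw⟩⟩

lemma neighborFinset_inter_XX_eq_empty {z : V} (hz : z ∈ ZZ G κ) :
    G.neighborFinset z ∩ XX G κ = ∅ := by
  simp only [ZZ, mem_sdiff, mem_union, mem_univ, true_and, not_or] at hz
  refine eq_empty_of_forall_notMem fun x hx => hz.2 (mem_YY.2 ⟨hz.1, x, ?_⟩)
  obtain ⟨hzx, hxX⟩ := mem_inter.1 hx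
  exact ⟨hxX, ((G.mem_neighborFinset _ _).1 hzx).symm⟩

lemma card_neighborFinset_inter_XX_le {v : V} (hv : v ∈ XX G κ ∪ ZZ G κ) :
    #(G.neighborFinset v ∩ XX G κ) ≤ κ v := by
  rcases mem_union.1 hv with hX | hZ
  · rw [mem_XX.1 hX, deg_eq_card_neighborFinset]
    exact card_le_card inter_subset_left
  · simp [neighborFinset_inter_XX_eq_empty hZ]

lemma card_insert_neighborFinset_inter_XX_le {u v : V} (hv : v ∈ XX G κ ∪ ZZ G κ)
    (hκv : 0 < κ v) (hvu : G.Adj v u) : #(insert u (G.neighborFinset v ∩ XX G κ)) ≤ κ v := by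
  rcases mem_union.1 hv with hX | hZ
  · rw [mem_XX.1 hX, deg_eq_card_neighborFinset]
    exact card_le_card (insert_subset ((G.mem_neighborFinset _ _).2 hvu) inter_subset_left)
  · rw [neighborFinset_inter_XX_eq_empty hZ, insert_empty, card_singleton]
    exact hκv

lemma exists_pos_card_neighborFinset_inter_XX_le {u : V} (hu : κ u ≠ 0) :
    ∃ v, 0 < κ v ∧ #(G.neighborFinset v ∩ XX G κ) ≤ κ v := by
  by_cases h : #(G.neighborFinset u ∩ XX G κ) ≤ κ u
  · exact ⟨u, Nat.pos_of_ne_zero hu, h⟩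
  obtain ⟨x, hx⟩ : (G.neighborFinset u ∩ XX G κ).Nonempty := card_pos.1 (by omega)
  obtain ⟨hux, hxX⟩ := mem_inter.1 hx
  refine ⟨x, ?_, card_neighborFinset_inter_XX_le (mem_union_left _ hxX)⟩
  rw [mem_XX.1 hxX, deg_eq_card_neighborFinset]
  exact card_pos.2 ⟨u, (G.mem_neighborFinset _ _).2 ((G.mem_neighborFinset _ _).1 hux).symm⟩

end Partition

namespace IsDPNash

variable {G : SimpleGraph V} {κ : V → ℕ} {D P : Finset V} {H : SimpleGraph V}

lemma deg_eq (h : IsDPNash G κ D P H) (hκ : ∀ v, κ v ≤ deg G v) {x : V} (hx : x ∈ D) :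
    deg H x = κ x := by
  rw [h.2.2.2.2.2 x hx, min_eq_right (hκ x)]

lemma notMem_of_adj (h : IsDPNash G κ D P H) {d v : V} (hd : d ∈ D) (hdv : H.Adj d v) :
    v ∉ D := by
  rcases h.2.2.2.1 hdv with ⟨-, hvP⟩ | ⟨hdP, -⟩
  · exact fun hvD => disjoint_left.1 h.2.2.1 hvD hvP
  · exact absurd hdP (disjoint_left.1 h.2.2.1 hd)

lemma exists_adj_of_notMem (h : IsDPNash G κ D P H) {v : V} (hv : v ∉ D) :
    ∃ d ∈ D, H.Adj d v := by
  have hvP : v ∈ P := (mem_union.1 (h.2.1 ▸ mem_univ v)).resolve_left hv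
  obtain ⟨d, hd⟩ := card_pos.1 (h.2.2.2.2.1 v hvP)
  have hvd : H.Adj v d := (mem_filter.1 hd).2
  rcases h.2.2.2.1 hvd with ⟨hvD, -⟩ | ⟨-, hdD⟩
  · exact absurd hvD hv
  · exact ⟨d, hdD, hvd.symm⟩

lemma neighborFinset_subset (h : IsDPNash G κ D P H) {x : V} (hx : x ∈ D) :
    H.neighborFinset x ⊆ G.neighborFinset x \ D := fun b hb => by
  have hxb := (H.mem_neighborFinset _ _).1 hb
  exact mem_sdiff.2 ⟨(G.mem_neighborFinset _ _).2 (h.1 hxb), h.notMem_of_adj hx hxb⟩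

lemma card_neighborFinset_inter_add_le (h : IsDPNash G κ D P H) (hκ : ∀ v, κ v ≤ deg G v)
    {x : V} (hx : x ∈ D) : #(G.neighborFinset x ∩ D) + κ x ≤ deg G x := by
  have := card_le_card (h.neighborFinset_subset hx)
  have := card_sdiff_add_card_inter (G.neighborFinset x) D
  rw [← h.deg_eq hκ hx, deg_eq_card_neighborFinset, deg_eq_card_neighborFinset]
  omega

lemma adj_of_mem_XX (h : IsDPNash G κ D P H) (hκ : ∀ v, κ v ≤ deg G v) {x y : V}
    (hx : x ∈ XX G κ) (hxD : x ∈ D) (hxy : G.Adj x y) : H.Adj x y := by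
  have hsub : H.neighborFinset x ⊆ G.neighborFinset x :=
    (h.neighborFinset_subset hxD).trans sdiff_subset
  have heq := eq_of_subset_of_card_le hsub (by
    rw [← deg_eq_card_neighborFinset, ← deg_eq_card_neighborFinset, h.deg_eq hκ hxD, mem_XX.1 hx])
  rw [← H.mem_neighborFinset, heq]
  exact (G.mem_neighborFinset _ _).2 hxy

lemma mem_Ypos_of_adj (h : IsDPNash G κ D P H) (hκ : ∀ v, κ v ≤ deg G v)
    (hind : ∀ u ∈ XX G κ ∪ ZZ G κ, ∀ v ∈ XX G κ ∪ ZZ G κ, ¬ G.Adj u v) {d v : V} (hd : d ∈ D)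
    (hv : v ∈ XX G κ ∪ ZZ G κ) (hdv : H.Adj d v) : d ∈ Ypos G κ := by
  refine mem_Ypos.2 ⟨?_, ?_⟩
  · by_contra hdY
    exact hind d (mem_XX_union_ZZ.2 hdY) v hv (h.1 hdv)
  · rw [← h.deg_eq hκ hd, deg_eq_card_neighborFinset]
    exact card_pos.2 ⟨v, (H.mem_neighborFinset _ _).2 hdv⟩

lemma inter_Ypos_eq_empty (h : IsDPNash G κ D P H) (hκ : ∀ v, κ v ≤ deg G v)
    (hind : ∀ u ∈ XX G κ ∪ ZZ G κ, ∀ v ∈ XX G κ ∪ ZZ G κ, ¬ G.Adj u v)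
    (hO : ∀ W : Finset V, W.Nonempty → W ⊆ Ypos G κ → ∑ w ∈ W, κ w < #(LL G κ W)) :
    D ∩ Ypos G κ = ∅ := by
  by_contra hne
  set W := D ∩ Ypos G κ
  have hL : LL G κ W ⊆ W.biUnion fun w => H.neighborFinset w := by
    intro x hx
    obtain ⟨hxXZ, hxW⟩ := mem_LL.1 hx
    have hxD : x ∉ D := fun hxD => by
      have := h.card_neighborFinset_inter_add_le hκ hxD
      have := card_le_card (inter_subset_inter subset_rfl inter_subset_left :
        G.neighborFinset x ∩ W ⊆ G.neighborFinset x ∩ D)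
      omega
    obtain ⟨d, hd, hdx⟩ := h.exists_adj_of_notMem hxD
    exact mem_biUnion.2 ⟨d, mem_inter.2 ⟨hd, h.mem_Ypos_of_adj hκ hind hd hxXZ hdx⟩,
      (H.mem_neighborFinset _ _).2 hdx⟩
  have hsum : ∑ w ∈ W, #(H.neighborFinset w) = ∑ w ∈ W, κ w := sum_congr rfl fun w hw => by
    rw [← deg_eq_card_neighborFinset, h.deg_eq hκ (mem_inter.1 hw).1]
  have := (card_le_card hL).trans card_biUnion_le
  have := hO W (nonempty_iff_ne_empty.2 hne) inter_subset_right
  omega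

lemma eq_XX_union_ZZ (h : IsDPNash G κ D P H) (hκ : ∀ v, κ v ≤ deg G v)
    (hind : ∀ u ∈ XX G κ ∪ ZZ G κ, ∀ v ∈ XX G κ ∪ ZZ G κ, ¬ G.Adj u v)
    (hO : ∀ W : Finset V, W.Nonempty → W ⊆ Ypos G κ → ∑ w ∈ W, κ w < #(LL G κ W)) :
    D = XX G κ ∪ ZZ G κ := by
  have hXZ : ∀ v ∈ XX G κ ∪ ZZ G κ, v ∈ D := fun v hv => by
    by_contra hvD
    obtain ⟨d, hd, hdv⟩ := h.exists_adj_of_notMem hvD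
    have hdW : d ∈ D ∩ Ypos G κ := mem_inter.2 ⟨hd, h.mem_Ypos_of_adj hκ hind hd hv hdv⟩
    rw [h.inter_Ypos_eq_empty hκ hind hO] at hdW
    exact notMem_empty d hdW
  ext v
  refine ⟨fun hvD => mem_XX_union_ZZ.2 fun hvY => ?_, hXZ v⟩
  obtain ⟨-, x, hx, hxv⟩ := mem_YY.1 hvY
  have hxD := hXZ x (mem_union_left _ hx)
  exact h.notMem_of_adj hxD (h.adj_of_mem_XX hκ hx hxD hxv) hvD

end IsDPNash

section Assignment

variable {α : Type*}

/-- The `P`-side is `Dᶜ`, and `s v` lists the neighbours of `v ∈ D` in the DP-Nash subgraph. -/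
structure IsDPAssignment (G : SimpleGraph α) (κ : α → ℕ) (D : Finset α) (s : α → Finset α) :
    Prop where
  adj : ∀ v ∈ D, ∀ b ∈ s v, G.Adj v b
  disjoint : ∀ v ∈ D, Disjoint (s v) D
  card_eq : ∀ v ∈ D, #(s v) = κ v
  cover : ∀ p ∉ D, ∃ v ∈ D, p ∈ s v

def assignmentGraph (D : Finset α) (s : α → Finset α) : SimpleGraph α :=
  SimpleGraph.fromRel fun a b => a ∈ D ∧ b ∈ s a

lemma assignmentGraph_adj {D : Finset α} {s : α → Finset α} {a b : α} :
    (assignmentGraph D s).Adj a b ↔ a ≠ b ∧ (a ∈ D ∧ b ∈ s a ∨ b ∈ D ∧ a ∈ s b) :=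
  SimpleGraph.fromRel_adj _ _ _

def UniqueDSet (G : SimpleGraph α) (κ : α → ℕ) : Prop :=
  ∀ ⦃D₁ D₂ : Finset α⦄ ⦃s₁ s₂ : α → Finset α⦄,
    IsDPAssignment G κ D₁ s₁ → IsDPAssignment G κ D₂ s₂ → D₁ = D₂

lemma IsDPAssignment.notMem_of_mem {G : SimpleGraph α} {κ : α → ℕ} {D : Finset α}
    {s : α → Finset α} (h : IsDPAssignment G κ D s) {v b : α} (hv : v ∈ D) (hb : b ∈ s v) :
    b ∉ D :=
  disjoint_left.1 (h.disjoint v hv) hb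

lemma IsDPAssignment.assignmentGraph_adj_iff {G : SimpleGraph α} {κ : α → ℕ} {D : Finset α}
    {s : α → Finset α} (h : IsDPAssignment G κ D s) {x b : α} (hx : x ∈ D) :
    (assignmentGraph D s).Adj x b ↔ b ∈ s x := by
  rw [assignmentGraph_adj]
  constructor
  · rintro ⟨-, ⟨-, hb⟩ | ⟨hb, hxb⟩⟩
    · exact hb
    · exact absurd hx (h.notMem_of_mem hb hxb)
  · intro hb
    exact ⟨fun hxb => h.notMem_of_mem hx hb (hxb ▸ hx), Or.inl ⟨hx, hb⟩⟩

end Assignment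

lemma IsDPAssignment.isDPNash {G : SimpleGraph V} {κ : V → ℕ} {D : Finset V} {s : V → Finset V}
    (h : IsDPAssignment G κ D s) (hκ : ∀ v, κ v ≤ deg G v) :
    IsDPNash G κ D Dᶜ (assignmentGraph D s) := by
  refine ⟨fun a b hab => ?_, union_compl D, disjoint_compl_right, fun a b hab => ?_, ?_, ?_⟩
  · rcases (assignmentGraph_adj.1 hab).2 with ⟨ha, hb⟩ | ⟨hb, ha⟩
    · exact h.adj a ha b hb
    · exact (h.adj b hb a ha).symm
  · rcases (assignmentGraph_adj.1 hab).2 with ⟨ha, hb⟩ | ⟨hb, ha⟩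
    · exact Or.inl ⟨ha, mem_compl.2 (h.notMem_of_mem ha hb)⟩
    · exact Or.inr ⟨mem_compl.2 (h.notMem_of_mem hb ha), hb⟩
  · intro p hp
    obtain ⟨v, hv, hpv⟩ := h.cover p (mem_compl.1 hp)
    exact card_pos.2 ⟨v, mem_filter.2 ⟨mem_univ _, ((h.assignmentGraph_adj_iff hv).2 hpv).symm⟩⟩
  · intro x hx
    have : (univ.filter fun y => (assignmentGraph D s).Adj x y) = s x := by
      ext b
      simp [h.assignmentGraph_adj_iff hx]
    rw [deg, this, h.card_eq x hx, min_eq_right (hκ x)]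

lemma isDPAssignment_univ {G : SimpleGraph V} {κ : V → ℕ} (hκ : ∀ v, κ v = 0) :
    IsDPAssignment G κ univ fun _ => ∅ where
  adj := by simp
  disjoint := by simp
  card_eq v _ := (hκ v).symm ▸ card_empty
  cover p hp := absurd (mem_univ p) hp

namespace SimpleGraph

def isolate {α : Type*} (G : SimpleGraph α) (K : Finset α) : SimpleGraph α where
  Adj a b := G.Adj a b ∧ a ∉ K ∧ b ∉ K
  symm := ⟨fun _ _ h => ⟨h.1.symm, h.2.2, h.2.1⟩⟩
  loopless := ⟨fun a h => G.loopless.irrefl a h.1⟩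

@[simp]
lemma isolate_adj {α : Type*} {G : SimpleGraph α} {K : Finset α} {a b : α} :
    (G.isolate K).Adj a b ↔ G.Adj a b ∧ a ∉ K ∧ b ∉ K :=
  Iff.rfl

lemma isolate_le {α : Type*} (G : SimpleGraph α) (K : Finset α) : G.isolate K ≤ G :=
  fun _ _ h => h.1

lemma isolate_lt {α : Type*} {G : SimpleGraph α} {K : Finset α} {v u : α} (hv : v ∈ K)
    (hvu : G.Adj v u) : G.isolate K < G :=
  (G.isolate_le K).lt_of_ne fun h => (isolate_adj.1 (h.symm ▸ hvu)).2.1 hv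

lemma neighborFinset_isolate {α : Type*} [Fintype α] {G : SimpleGraph α} {K : Finset α} {v : α}
    (hv : v ∉ K) : (G.isolate K).neighborFinset v = G.neighborFinset v \ K := by
  ext b
  simp [hv]

end SimpleGraph

section Existence

variable {G : SimpleGraph V} {κ : V → ℕ}

lemma sub_min_deg_isolate_le {S T : Finset V} (hST : Disjoint S T) {u : V} (hu : u ∉ S ∪ T)
    (hout : #(G.neighborFinset u ∩ S) + κ u ≤ deg G u) :
    κ u - min (κ u) (deg (G.isolate (S ∪ T)) u) ≤ #(G.neighborFinset u ∩ T) := by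
  have hdeg : deg (G.isolate (S ∪ T)) u + #(G.neighborFinset u ∩ (S ∪ T)) = deg G u := by
    rw [deg_eq_card_neighborFinset, deg_eq_card_neighborFinset,
      SimpleGraph.neighborFinset_isolate hu]
    exact card_sdiff_add_card_inter _ _
  rw [inter_union_distrib_left,
    card_union_of_disjoint (hST.mono inter_subset_right inter_subset_right)] at hdeg
  omega

lemma IsDPAssignment.union_isolate {S T : Finset V} {a : V → Finset V} (hST : Disjoint S T)
    (ha : ∀ v ∈ S, a v ⊆ G.neighborFinset v ∩ T ∧ #(a v) = κ v)
    (hcov : ∀ t ∈ T, ∃ v ∈ S, t ∈ a v) {D' : Finset V} {s' pat : V → Finset V}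
    (h' : IsDPAssignment (G.isolate (S ∪ T))
      (fun u => min (κ u) (deg (G.isolate (S ∪ T)) u)) D' s')
    (hpat : ∀ u ∉ S ∪ T, pat u ⊆ G.neighborFinset u ∩ T ∧
      #(pat u) = κ u - min (κ u) (deg (G.isolate (S ∪ T)) u)) :
    IsDPAssignment G κ (S ∪ (D' \ (S ∪ T))) fun v => if v ∈ S then a v else s' v ∪ pat v := by
  set K := S ∪ T
  have hs'K : ∀ v ∈ D', ∀ b ∈ s' v, v ∉ K ∧ b ∉ K := fun v hv b hb => (h'.adj v hv b hb).2
  have hTD : Disjoint T (S ∪ (D' \ K)) := disjoint_union_right.2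
    ⟨hST.symm, disjoint_left.2 fun t ht htD => (mem_sdiff.1 htD).2 (mem_union_right _ ht)⟩
  have hpatT : ∀ u ∉ K, pat u ⊆ T := fun u hu => (hpat u hu).1.trans inter_subset_right
  refine ⟨fun v hv b hb => ?_, fun v hv => ?_, fun v hv => ?_, fun p hp => ?_⟩
  · split_ifs at hb with hvS
    · exact (G.mem_neighborFinset _ _).1 (mem_inter.1 ((ha v hvS).1 hb)).1
    obtain ⟨hvD', hvK⟩ := mem_sdiff.1 ((mem_union.1 hv).resolve_left hvS)
    rcases mem_union.1 hb with hb | hb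
    · exact (h'.adj v hvD' b hb).1
    · exact (G.mem_neighborFinset _ _).1 (mem_inter.1 ((hpat v hvK).1 hb)).1
  · split_ifs with hvS
    · exact hTD.mono_left ((ha v hvS).1.trans inter_subset_right)
    obtain ⟨hvD', hvK⟩ := mem_sdiff.1 ((mem_union.1 hv).resolve_left hvS)
    refine disjoint_union_left.2 ⟨disjoint_left.2 fun b hb hbD => ?_, hTD.mono_left (hpatT v hvK)⟩
    rcases mem_union.1 hbD with hbS | hbD'
    · exact (hs'K v hvD' b hb).2 (mem_union_left _ hbS)
    · exact h'.notMem_of_mem hvD' hb (mem_sdiff.1 hbD').1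
  · split_ifs with hvS
    · exact (ha v hvS).2
    obtain ⟨hvD', hvK⟩ := mem_sdiff.1 ((mem_union.1 hv).resolve_left hvS)
    have hdisj : Disjoint (s' v) (pat v) := disjoint_left.2 fun b hb hbp =>
      (hs'K v hvD' b hb).2 (mem_union_right _ (hpatT v hvK hbp))
    rw [card_union_of_disjoint hdisj, h'.card_eq v hvD', (hpat v hvK).2]
    exact Nat.add_sub_cancel' (min_le_left _ _)
  · by_cases hpT : p ∈ T
    · obtain ⟨v, hvS, hpv⟩ := hcov p hpT
      exact ⟨v, mem_union_left _ hvS, by simp [hvS, hpv]⟩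
    have hpK : p ∉ K := fun h => (mem_union.1 h).elim (fun h => hp (mem_union_left _ h)) hpT
    obtain ⟨v, hvD', hpv⟩ := h'.cover p fun h => hp (mem_union_right _ (mem_sdiff.2 ⟨h, hpK⟩))
    have hvK := (hs'K v hvD' p hpv).1
    have hvS : v ∉ S := fun h => hvK (mem_union_left _ h)
    exact ⟨v, mem_union_right _ (mem_sdiff.2 ⟨hvD', hvK⟩), by simp [hvS, hpv]⟩

/-- Vertices outside `S ∪ T` lose at most `deg - κ` edges into `S`, so the capacity they lose
when `S ∪ T` is isolated can be restored with edges into `T`. -/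
lemma IsDPAssignment.extend {S T : Finset V} {a : V → Finset V} (hST : Disjoint S T)
    (ha : ∀ v ∈ S, a v ⊆ G.neighborFinset v ∩ T ∧ #(a v) = κ v)
    (hcov : ∀ t ∈ T, ∃ v ∈ S, t ∈ a v)
    (hout : ∀ u ∉ S ∪ T, #(G.neighborFinset u ∩ S) + κ u ≤ deg G u)
    {D' : Finset V} {s' : V → Finset V}
    (h' : IsDPAssignment (G.isolate (S ∪ T))
      (fun u => min (κ u) (deg (G.isolate (S ∪ T)) u)) D' s') :
    ∃ D s, IsDPAssignment G κ D s ∧ S ⊆ D ∧ Disjoint T D := by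
  have hpat : ∀ u ∉ S ∪ T, ∃ p ⊆ G.neighborFinset u ∩ T,
      #p = κ u - min (κ u) (deg (G.isolate (S ∪ T)) u) :=
    fun u hu => exists_subset_card_eq (sub_min_deg_isolate_le hST hu (hout u hu))
  choose! pat hpat_sub hpat_card using hpat
  exact ⟨_, _, h'.union_isolate hST ha hcov fun u hu => ⟨hpat_sub u hu, hpat_card u hu⟩,
    subset_union_left, disjoint_union_right.2
      ⟨hST.symm, disjoint_left.2 fun t ht htD => (mem_sdiff.1 htD).2 (mem_union_right _ ht)⟩⟩

lemma exists_isDPAssignment_center_of_isolate (hκ : ∀ v, κ v ≤ deg G v) {v : V}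
    {U : Finset V} (hU : U ⊆ G.neighborFinset v) (hXU : G.neighborFinset v ∩ XX G κ ⊆ U)
    (hUκ : #U ≤ κ v)
    (h' : ∀ K : Finset V, v ∈ K → ∀ κ' : V → ℕ, (∀ u, κ' u ≤ deg (G.isolate K) u) →
      ∃ D' s', IsDPAssignment (G.isolate K) κ' D' s') :
    ∃ D s, IsDPAssignment G κ D s ∧ v ∈ D ∧ Disjoint U D := by
  obtain ⟨T, hUT, hT, hTκ⟩ :=
    exists_subsuperset_card_eq hU hUκ ((hκ v).trans (deg_eq_card_neighborFinset G v).le)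
  have hvT : v ∉ T := fun h => G.loopless.irrefl v ((G.mem_neighborFinset _ _).1 (hT h))
  have hout : ∀ u ∉ {v} ∪ T, #(G.neighborFinset u ∩ {v}) + κ u ≤ deg G u := by
    intro u hu
    rcases (hκ u).lt_or_eq with hlt | heq
    · have := card_le_card (inter_subset_right : G.neighborFinset u ∩ {v} ⊆ {v})
      rw [card_singleton] at this
      omega
    · have hvu : v ∉ G.neighborFinset u := fun h => hu (mem_union_right _ (hUT (hXU (mem_inter.2
        ⟨(G.mem_neighborFinset _ _).2 ((G.mem_neighborFinset _ _).1 h).symm, mem_XX.2 heq⟩))))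
      rw [inter_singleton_of_notMem hvu, card_empty, zero_add, heq]
  obtain ⟨D', s', hs'⟩ := h' ({v} ∪ T) (mem_union_left _ (mem_singleton_self v)) _
    fun u => min_le_right _ _
  obtain ⟨D, s, hs, hvD, hTD⟩ := hs'.extend (disjoint_singleton_left.2 hvT) (a := fun _ => T)
    (fun w hw => by rw [mem_singleton.1 hw]; exact ⟨subset_inter hT subset_rfl, hTκ⟩)
    (fun t ht => ⟨v, mem_singleton_self v, ht⟩) hout
  exact ⟨D, s, hs, hvD (mem_singleton_self v), hTD.mono_left hUT⟩

theorem exists_isDPAssignment (G : SimpleGraph V) (κ : V → ℕ) (hκ : ∀ v, κ v ≤ deg G v) :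
    ∃ D s, IsDPAssignment G κ D s := by
  induction G using WellFoundedLT.induction generalizing κ with
  | _ G ih =>
    by_cases h0 : ∀ v, κ v = 0
    · exact ⟨univ, _, isDPAssignment_univ h0⟩
    obtain ⟨v, hv, hvX⟩ :=
      exists_pos_card_neighborFinset_inter_XX_le (not_forall.1 h0).choose_spec
    obtain ⟨u, hu⟩ : (G.neighborFinset v).Nonempty :=
      card_pos.1 ((deg_eq_card_neighborFinset G v) ▸ hv.trans_le (hκ v))
    obtain ⟨D, s, hs, -⟩ := exists_isDPAssignment_center_of_isolate hκ inter_subset_left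
      subset_rfl hvX fun K hK κ' hκ' =>
        ih _ (SimpleGraph.isolate_lt hK ((G.mem_neighborFinset _ _).1 hu)) κ' hκ'
    exact ⟨D, s, hs⟩

lemma exists_isDPAssignment_center (hκ : ∀ v, κ v ≤ deg G v) {v : V} {U : Finset V}
    (hU : U ⊆ G.neighborFinset v) (hXU : G.neighborFinset v ∩ XX G κ ⊆ U) (hUκ : #U ≤ κ v) :
    ∃ D s, IsDPAssignment G κ D s ∧ v ∈ D ∧ Disjoint U D :=
  exists_isDPAssignment_center_of_isolate hκ hU hXU hUκ fun _ _ κ' hκ' =>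
    exists_isDPAssignment _ κ' hκ'

lemma exists_isDPAssignment_mem (hκ : ∀ v, κ v ≤ deg G v) {v : V}
    (hv : v ∈ XX G κ ∪ ZZ G κ) : ∃ D s, IsDPAssignment G κ D s ∧ v ∈ D := by
  obtain ⟨D, s, hs, hvD, -⟩ := exists_isDPAssignment_center hκ inter_subset_left subset_rfl
    (card_neighborFinset_inter_XX_le hv)
  exact ⟨D, s, hs, hvD⟩

lemma exists_isDPAssignment_notMem (hκ : ∀ v, κ v ≤ deg G v) {u v : V} (hvu : G.Adj v u)
    (hcard : #(insert u (G.neighborFinset v ∩ XX G κ)) ≤ κ v) :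
    ∃ D s, IsDPAssignment G κ D s ∧ u ∉ D := by
  obtain ⟨D, s, hs, -, hUD⟩ := exists_isDPAssignment_center hκ
    (insert_subset ((G.mem_neighborFinset _ _).2 hvu) inter_subset_left) (subset_insert _ _) hcard
  exact ⟨D, s, hs, disjoint_left.1 hUD (mem_insert_self _ _)⟩

end Existence

section Hall

variable {α β : Type*}

/-- Hall's theorem applied to `c a` copies of each `a`. -/
lemma exists_capacitated_matching (A : Finset α) (B : Finset β) (r : α → β → Prop) (c : α → ℕ)
    (hall : ∀ B' ⊆ B, #B' ≤ ∑ a ∈ A with ∃ b ∈ B', r a b, c a) :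
    ∃ g : B → α, (∀ b, g b ∈ A ∧ r (g b) b) ∧ ∀ a, #{b | g b = a} ≤ c a := by
  set t : B → Finset (Σ _ : α, ℕ) := fun b => {a ∈ A | r a b}.sigma fun a => range (c a)
  have ht : ∀ s : Finset B,
      s.biUnion t = {a ∈ A | ∃ b ∈ s.map (Function.Embedding.subtype _), r a b}.sigma
        fun a => range (c a) := by
    intro s
    ext ⟨a, i⟩
    simp only [t, mem_biUnion, mem_sigma, mem_filter, mem_range, mem_map,
      Function.Embedding.coe_subtype]
    constructor
    · rintro ⟨b, hb, ⟨haA, hab⟩, hi⟩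
      exact ⟨⟨haA, b, ⟨b, hb, rfl⟩, hab⟩, hi⟩
    · rintro ⟨⟨haA, _, ⟨b, hb, rfl⟩, hab⟩, hi⟩
      exact ⟨b, hb, ⟨haA, hab⟩, hi⟩
  obtain ⟨f, hf, hft⟩ := (all_card_le_biUnion_card_iff_exists_injective t).1 fun s => by
    rw [ht, card_sigma]
    simp only [card_range]
    exact (card_map _).symm.le.trans
      (hall _ fun b hb => by obtain ⟨b, -, rfl⟩ := mem_map.1 hb; exact b.2)
  have hfmem : ∀ b, (f b).1 ∈ A ∧ r (f b).1 b ∧ (f b).2 < c (f b).1 := fun b => by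
    have := hft b
    simp only [t, mem_sigma, mem_filter, mem_range] at this
    exact ⟨this.1.1, this.1.2, this.2⟩
  refine ⟨fun b => (f b).1, fun b => ⟨(hfmem b).1, (hfmem b).2.1⟩, fun a => ?_⟩
  calc #{b | (f b).1 = a} ≤ #(range (c a)) := card_le_card_of_injOn (fun b => (f b).2)
        (fun b hb => by
          rw [mem_coe, mem_filter_univ] at hb
          exact mem_range.2 (hb ▸ (hfmem b).2.2))
        (fun b hb b' hb' hbb' => hf (Sigma.ext (by
          rw [mem_coe, mem_filter_univ] at hb hb'
          rw [hb, hb']) (heq_of_eq hbb')))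
    _ = c a := card_range _

lemma exists_capacitated_cover (A : Finset α) (B : Finset β) (r : α → β → Prop) (c : α → ℕ)
    (hc : ∀ a ∈ A, c a ≤ #{b ∈ B | r a b})
    (hall : ∀ B' ⊆ B, #B' ≤ ∑ a ∈ A with ∃ b ∈ B', r a b, c a) :
    ∃ T : α → Finset β, (∀ a ∈ A, (∀ b ∈ T a, b ∈ B ∧ r a b) ∧ #(T a) = c a) ∧
      ∀ b ∈ B, ∃ a ∈ A, b ∈ T a := by
  obtain ⟨g, hg, hgc⟩ := exists_capacitated_matching A B r c hall
  set M : α → Finset β := fun a => ({b | g b = a} : Finset B).map (Function.Embedding.subtype _)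
  have hM : ∀ a ∈ A, ∃ T', M a ⊆ T' ∧ T' ⊆ {b ∈ B | r a b} ∧ #T' = c a := fun a ha =>
    exists_subsuperset_card_eq
      (fun b hb => by
        obtain ⟨b, hba, rfl⟩ := mem_map.1 hb
        rw [mem_filter_univ] at hba
        exact mem_filter.2 ⟨b.2, hba ▸ (hg b).2⟩)
      ((card_map _).le.trans (hgc a)) (hc a ha)
  choose! T hMT hT hTc using hM
  refine ⟨T, fun a ha => ⟨fun b hb => mem_filter.1 (hT a ha hb), hTc a ha⟩, fun b hb => ?_⟩
  refine ⟨g ⟨b, hb⟩, (hg _).1, hMT _ (hg _).1 (mem_map.2 ⟨⟨b, hb⟩, ?_, rfl⟩)⟩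
  exact (mem_filter_univ _).2 rfl

end Hall

section Deficiency

variable {G : SimpleGraph V} {κ : V → ℕ}

def deficiency (G : SimpleGraph V) (κ : V → ℕ) (W : Finset V) : ℤ :=
  ∑ w ∈ W, (κ w : ℤ) - #(LL G κ W)

/-- The vertices of `B` have no neighbours in `A = W \ N(B)`, so `B` avoids `L(A)`, and
`deficiency A ≤ deficiency W` does the rest. -/
lemma card_le_sum_of_forall_deficiency_le {W : Finset V}
    (hmax : ∀ A ⊆ W, deficiency G κ A ≤ deficiency G κ W) {B : Finset V}
    (hB : B ⊆ LL G κ W) : #B ≤ ∑ w ∈ W with ∃ b ∈ B, G.Adj w b, κ w := by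
  set W' := W.filter fun w => ∃ b ∈ B, G.Adj w b
  have hdisj : Disjoint B (LL G κ (W \ W')) := disjoint_left.2 fun b hb hbL => by
    obtain ⟨w, hw⟩ := card_pos.1 ((Nat.zero_le _).trans_lt (mem_LL.1 hbL).2)
    obtain ⟨hbw, hwW, hwW'⟩ := And.imp_right mem_sdiff.1 (mem_inter.1 hw)
    exact hwW' (mem_filter.2 ⟨hwW, b, hb, ((G.mem_neighborFinset _ _).1 hbw).symm⟩)
  have hcard : #B + #(LL G κ (W \ W')) ≤ #(LL G κ W) := by
    rw [← card_union_of_disjoint hdisj]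
    exact card_le_card (union_subset hB (LL_mono sdiff_subset))
  have hsum : ∑ w ∈ W \ W', (κ w : ℤ) + ∑ w ∈ W', (κ w : ℤ) = ∑ w ∈ W, (κ w : ℤ) :=
    sum_sdiff (filter_subset _ _)
  have hdef := hmax (W \ W') sdiff_subset
  simp only [deficiency] at hdef
  have : (#B : ℤ) ≤ ∑ w ∈ W', (κ w : ℤ) := by
    have : (#B : ℤ) + #(LL G κ (W \ W')) ≤ #(LL G κ W) := by exact_mod_cast hcard
    linarith
  exact_mod_cast this

lemma exists_adj_of_deficiency_insert_lt (hκ : ∀ v, κ v ≤ deg G v) {W : Finset V} {t : V}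
    (ht : t ∉ W) (hlt : deficiency G κ (insert t W) < deficiency G κ W) :
    ∃ x ∈ XX G κ ∪ ZZ G κ, x ∉ LL G κ W ∧ G.Adj x t ∧
      #(G.neighborFinset x ∩ W) + κ x = deg G x := by
  have hL : #(LL G κ W) < #(LL G κ (insert t W)) := by
    simp only [deficiency, sum_insert ht] at hlt
    omega
  obtain ⟨x, hx, hxW⟩ := exists_mem_notMem_of_card_lt_card hL
  obtain ⟨hxXZ, hxt⟩ := mem_LL.1 hx
  have hxW' : #(G.neighborFinset x ∩ W) ≤ deg G x - κ x :=
    not_lt.1 fun h => hxW (mem_LL.2 ⟨hxXZ, h⟩)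
  have htx : t ∈ G.neighborFinset x := by
    by_contra htx
    rw [inter_insert_of_notMem htx] at hxt
    omega
  rw [inter_insert_of_mem htx, card_insert_of_notMem fun h => ht (mem_inter.1 h).2] at hxt
  have := hκ x
  exact ⟨x, hxXZ, hxW, (G.mem_neighborFinset _ _).1 htx, by omega⟩

/-- Maximise the deficiency, and then the size, over nonempty subsets of `Y^{κ>0}`. -/
lemma exists_deficiency_max {W₀ : Finset V} (hW₀ : W₀.Nonempty) (hW₀Y : W₀ ⊆ Ypos G κ) :
    ∃ W, W.Nonempty ∧ W ⊆ Ypos G κ ∧ deficiency G κ W₀ ≤ deficiency G κ W ∧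
      (∀ A ⊆ W, A.Nonempty → deficiency G κ A ≤ deficiency G κ W) ∧
      ∀ t ∈ Ypos G κ, t ∉ W → deficiency G κ (insert t W) < deficiency G κ W := by
  obtain ⟨W, hW, hmax⟩ := ((Ypos G κ).powerset.filter Finset.Nonempty).exists_max_image
    (fun A => toLex (deficiency G κ A, #A)) ⟨W₀, mem_filter.2 ⟨mem_powerset.2 hW₀Y, hW₀⟩⟩
  obtain ⟨hWY, hWn⟩ := And.imp_left mem_powerset.1 (mem_filter.1 hW)
  have hmax' : ∀ A ⊆ Ypos G κ, A.Nonempty →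
      deficiency G κ A < deficiency G κ W ∨
        deficiency G κ A = deficiency G κ W ∧ #A ≤ #W := fun A hA hAn =>
    Prod.Lex.toLex_le_toLex.1 (hmax A (mem_filter.2 ⟨mem_powerset.2 hA, hAn⟩))
  refine ⟨W, hWn, hWY, ?_, fun A hA hAn => ?_, fun t ht htW => ?_⟩
  · rcases hmax' W₀ hW₀Y hW₀ with h | h
    exacts [h.le, h.1.le]
  · rcases hmax' A (hA.trans hWY) hAn with h | h
    exacts [h.le, h.1.le]
  · have := hmax' (insert t W) (insert_subset ht hWY) (insert_nonempty t W)
    rw [card_insert_of_notMem htW] at this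
    omega

end Deficiency

section Construction

variable {G : SimpleGraph V} {κ : V → ℕ}

lemma mem_of_subset_sdiff_of_card_eq {W S : Finset V} {x y : V}
    (hS : S ⊆ G.neighborFinset x \ W) (hSκ : #S = κ x)
    (hx : #(G.neighborFinset x ∩ W) + κ x = deg G x) (hxy : G.Adj x y) (hyW : y ∉ W) :
    y ∈ S := by
  have hsplit := card_sdiff_add_card_inter (G.neighborFinset x) W
  rw [← deg_eq_card_neighborFinset] at hsplit
  rw [eq_of_subset_of_card_le hS (by omega)]
  exact mem_sdiff.2 ⟨(G.mem_neighborFinset _ _).2 hxy, hyW⟩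

/-- The vertices of `Y \ W` missed by every `S x` land in `D` with no edges; `hYpos` ensures
that they have `κ = 0`. -/
lemma isDPAssignment_of_cover
    (hind : ∀ u ∈ XX G κ ∪ ZZ G κ, ∀ v ∈ XX G κ ∪ ZZ G κ, ¬ G.Adj u v)
    {W : Finset V} (hWY : W ⊆ YY G κ) {T S : V → Finset V}
    (hT : ∀ w ∈ W, (∀ x ∈ T w, x ∈ LL G κ W ∧ G.Adj w x) ∧ #(T w) = κ w)
    (hcov : ∀ x ∈ LL G κ W, ∃ w ∈ W, x ∈ T w)
    (hS : ∀ x ∈ (XX G κ ∪ ZZ G κ) \ LL G κ W, S x ⊆ G.neighborFinset x \ W ∧ #(S x) = κ x)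
    (hYpos : ∀ y ∈ Ypos G κ, y ∉ W → y ∈ ((XX G κ ∪ ZZ G κ) \ LL G κ W).biUnion S) :
    IsDPAssignment G κ (LL G κ W ∪ ((XX G κ ∪ ZZ G κ) \ LL G κ W).biUnion S)ᶜ
      fun v => if v ∈ W then T v else if v ∈ (XX G κ ∪ ZZ G κ) \ LL G κ W then S v else ∅ := by
  set R := (XX G κ ∪ ZZ G κ) \ LL G κ W
  have hWXZ : ∀ w ∈ W, w ∉ XX G κ ∪ ZZ G κ := fun w hw h => mem_XX_union_ZZ.1 h (hWY hw)
  have hSY : ∀ x ∈ R, ∀ b ∈ S x, b ∉ XX G κ ∪ ZZ G κ := fun x hx b hb h =>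
    hind x (mem_sdiff.1 hx).1 b h ((G.mem_neighborFinset _ _).1 (mem_sdiff.1 ((hS x hx).1 hb)).1)
  refine ⟨fun v _ b hb => ?_, fun v _ => disjoint_left.2 fun b hb hbD => mem_compl.1 hbD ?_,
    fun v hv => ?_, fun p hp => ?_⟩
  · split_ifs at hb with hvW hvR
    · exact ((hT v hvW).1 b hb).2
    · exact (G.mem_neighborFinset _ _).1 (mem_sdiff.1 ((hS v hvR).1 hb)).1
    · exact absurd hb (notMem_empty b)
  · split_ifs at hb with hvW hvR
    · exact mem_union_left _ ((hT v hvW).1 b hb).1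
    · exact mem_union_right _ (mem_biUnion.2 ⟨v, hvR, hb⟩)
    · exact absurd hb (notMem_empty b)
  · split_ifs with hvW hvR
    · exact (hT v hvW).2
    · exact (hS v hvR).2
    · have hvY : v ∈ YY G κ := by_contra fun hvY => hvR (mem_sdiff.2
        ⟨mem_XX_union_ZZ.2 hvY, fun hL => mem_compl.1 hv (mem_union_left _ hL)⟩)
      by_contra hκv
      exact mem_compl.1 hv (mem_union_right _
        (hYpos v (mem_Ypos.2 ⟨hvY, Nat.pos_of_ne_zero (Ne.symm hκv)⟩) hvW))
  · rcases mem_union.1 (not_not.1 (mem_compl.not.1 hp)) with hpL | hpS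
    · obtain ⟨w, hw, hpw⟩ := hcov p hpL
      refine ⟨w, mem_compl.2 fun h => (mem_union.1 h).elim (fun h => hWXZ w hw (mem_LL.1 h).1)
        fun h => ?_, by simpa [hw] using hpw⟩
      obtain ⟨x, hx, hwx⟩ := mem_biUnion.1 h
      exact (mem_sdiff.1 ((hS x hx).1 hwx)).2 hw
    · obtain ⟨x, hxR, hpx⟩ := mem_biUnion.1 hpS
      have hxW : x ∉ W := fun hxW => hWXZ x hxW (mem_sdiff.1 hxR).1
      refine ⟨x, mem_compl.2 fun h => (mem_union.1 h).elim (mem_sdiff.1 hxR).2 fun h => ?_,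
        by simpa [hxW, hxR] using hpx⟩
      obtain ⟨x', hx', hxx'⟩ := mem_biUnion.1 h
      exact hSY x' hx' x hxx' (mem_sdiff.1 hxR).1

lemma exists_isDPAssignment_of_cover (hκ : ∀ v, κ v ≤ deg G v)
    (hind : ∀ u ∈ XX G κ ∪ ZZ G κ, ∀ v ∈ XX G κ ∪ ZZ G κ, ¬ G.Adj u v)
    {W : Finset V} (hWY : W ⊆ YY G κ) {T : V → Finset V}
    (hT : ∀ w ∈ W, (∀ x ∈ T w, x ∈ LL G κ W ∧ G.Adj w x) ∧ #(T w) = κ w)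
    (hcov : ∀ x ∈ LL G κ W, ∃ w ∈ W, x ∈ T w)
    (hex : ∀ t ∈ Ypos G κ, t ∉ W → ∃ x ∈ XX G κ ∪ ZZ G κ, x ∉ LL G κ W ∧ G.Adj x t ∧
      #(G.neighborFinset x ∩ W) + κ x = deg G x) :
    ∃ D s, IsDPAssignment G κ D s ∧ W ⊆ D ∧ ∀ y ∈ Ypos G κ, y ∈ D → y ∈ W := by
  have hS : ∀ x ∈ (XX G κ ∪ ZZ G κ) \ LL G κ W, ∃ S ⊆ G.neighborFinset x \ W, #S = κ x :=
    fun x hx => by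
      obtain ⟨hxXZ, hxL⟩ := mem_sdiff.1 hx
      have := not_lt.1 fun h => hxL (mem_LL.2 ⟨hxXZ, h⟩)
      have hsplit := card_sdiff_add_card_inter (G.neighborFinset x) W
      rw [← deg_eq_card_neighborFinset] at hsplit
      have := hκ x
      exact exists_subset_card_eq (by omega)
  choose! S hS_sub hS_card using hS
  have hYpos : ∀ y ∈ Ypos G κ, y ∉ W → y ∈ ((XX G κ ∪ ZZ G κ) \ LL G κ W).biUnion S :=
    fun y hy hyW => by
      obtain ⟨x, hxXZ, hxL, hxy, hx⟩ := hex y hy hyW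
      have hxR := mem_sdiff.2 ⟨hxXZ, hxL⟩
      exact mem_biUnion.2 ⟨x, hxR,
        mem_of_subset_sdiff_of_card_eq (hS_sub x hxR) (hS_card x hxR) hx hxy hyW⟩
  refine ⟨_, _, isDPAssignment_of_cover hind hWY hT hcov
    (fun x hx => ⟨hS_sub x hx, hS_card x hx⟩) hYpos, fun w hw => mem_compl.2 fun h => ?_,
    fun y hy hyD => by_contra fun hyW => mem_compl.1 hyD (mem_union_right _ (hYpos y hy hyW))⟩
  rcases mem_union.1 h with hwL | hwS
  · exact mem_XX_union_ZZ.1 (mem_LL.1 hwL).1 (hWY hw)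
  · obtain ⟨x, hx, hwx⟩ := mem_biUnion.1 hwS
    exact (mem_sdiff.1 (hS_sub x hx hwx)).2 hw

lemma exists_isDPAssignment_forall_notMem_Ypos (hκ : ∀ v, κ v ≤ deg G v)
    (hind : ∀ u ∈ XX G κ ∪ ZZ G κ, ∀ v ∈ XX G κ ∪ ZZ G κ, ¬ G.Adj u v) :
    ∃ D s, IsDPAssignment G κ D s ∧ ∀ y ∈ Ypos G κ, y ∉ D := by
  obtain ⟨D, s, hs, -, hY⟩ := exists_isDPAssignment_of_cover hκ hind (empty_subset _)
    (T := fun _ => ∅) (by simp) (by simp [LL_empty]) fun t ht _ => by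
      obtain ⟨-, x, hx, hxt⟩ := mem_YY.1 (mem_Ypos.1 ht).1
      exact ⟨x, mem_union_left _ hx, by simp [LL_empty], hxt, by simpa using (mem_XX.1 hx)⟩
  exact ⟨D, s, hs, fun y hy hyD => notMem_empty y (hY y hy hyD)⟩

end Construction

section Forward

variable {G : SimpleGraph V} {κ : V → ℕ}

lemma exists_isDPAssignment_of_deficient (hκ : ∀ v, κ v ≤ deg G v)
    (hind : ∀ u ∈ XX G κ ∪ ZZ G κ, ∀ v ∈ XX G κ ∪ ZZ G κ, ¬ G.Adj u v)
    (hrich : ∀ w ∈ Ypos G κ, κ w < #(G.neighborFinset w ∩ XX G κ))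
    {W₀ : Finset V} (hW₀ : W₀.Nonempty) (hW₀Y : W₀ ⊆ Ypos G κ)
    (hdef : #(LL G κ W₀) ≤ ∑ w ∈ W₀, κ w) :
    ∃ D s, IsDPAssignment G κ D s ∧ ∃ w ∈ Ypos G κ, w ∈ D := by
  obtain ⟨W, ⟨w, hw⟩, hWY, hW₀W, hsub, hins⟩ := exists_deficiency_max hW₀ hW₀Y
  have hmax : ∀ A ⊆ W, deficiency G κ A ≤ deficiency G κ W := fun A hA => by
    rcases A.eq_empty_or_nonempty with rfl | hAn
    · have : (#(LL G κ W₀) : ℤ) ≤ ∑ w ∈ W₀, (κ w : ℤ) := by exact_mod_cast hdef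
      simp only [deficiency, LL_empty, sum_empty, card_empty] at hW₀W ⊢
      linarith
    · exact hsub A hA hAn
  obtain ⟨T, hT, hcov⟩ := exists_capacitated_cover W (LL G κ W) G.Adj κ
    (fun w hw => (hrich w (hWY hw)).le.trans (card_le_card fun x hx => by
      obtain ⟨hwx, hxX⟩ := mem_inter.1 hx
      have hwx := (G.mem_neighborFinset _ _).1 hwx
      exact mem_filter.2 ⟨mem_LL_of_mem_XX hxX hw hwx.symm, hwx⟩))
    fun B hB => card_le_sum_of_forall_deficiency_le hmax hB
  obtain ⟨D, s, hs, hWD, -⟩ := exists_isDPAssignment_of_cover hκ hind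
    (fun w hw => (mem_Ypos.1 (hWY hw)).1) hT hcov
    fun t ht htW => exists_adj_of_deficiency_insert_lt hκ htW (hins t ht htW)
  exact ⟨D, s, hs, w, hWY hw, hWD hw⟩

lemma not_adj_of_uniqueDSet (hκ : ∀ v, κ v ≤ deg G v)
    (hedge : ∀ u v, G.Adj u v → 0 < κ u ∨ 0 < κ v) (huniq : UniqueDSet G κ) {u v : V}
    (hu : u ∈ XX G κ ∪ ZZ G κ) (hv : v ∈ XX G κ ∪ ZZ G κ) : ¬ G.Adj u v := by
  intro huv
  wlog hκv : 0 < κ v generalizing u v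
  · exact this hv hu huv.symm ((hedge u v huv).resolve_right hκv)
  obtain ⟨D₁, s₁, h₁, hu₁⟩ := exists_isDPAssignment_notMem hκ huv.symm
    (card_insert_neighborFinset_inter_XX_le hv hκv huv.symm)
  obtain ⟨D₂, s₂, h₂, hu₂⟩ := exists_isDPAssignment_mem hκ hu
  exact hu₁ (huniq h₁ h₂ ▸ hu₂)

lemma sum_lt_card_LL_of_uniqueDSet (hκ : ∀ v, κ v ≤ deg G v)
    (hind : ∀ u ∈ XX G κ ∪ ZZ G κ, ∀ v ∈ XX G κ ∪ ZZ G κ, ¬ G.Adj u v)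
    (huniq : UniqueDSet G κ) {W : Finset V} (hW : W.Nonempty) (hWY : W ⊆ Ypos G κ) :
    ∑ w ∈ W, κ w < #(LL G κ W) := by
  by_contra! hdef
  by_cases hpoor : ∃ w ∈ Ypos G κ, #(G.neighborFinset w ∩ XX G κ) ≤ κ w
  · obtain ⟨w, hw, hwX⟩ := hpoor
    obtain ⟨x, hx, hxw⟩ := (mem_YY.1 (mem_Ypos.1 hw).1).2
    have hxN : x ∈ G.neighborFinset w ∩ XX G κ :=
      mem_inter.2 ⟨(G.mem_neighborFinset _ _).2 hxw.symm, hx⟩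
    obtain ⟨D₁, s₁, h₁, hx₁⟩ := exists_isDPAssignment_notMem hκ hxw.symm
      ((insert_eq_of_mem hxN).symm ▸ hwX)
    obtain ⟨D₂, s₂, h₂, hx₂⟩ := exists_isDPAssignment_mem hκ (mem_union_left _ hx)
    exact hx₁ (huniq h₁ h₂ ▸ hx₂)
  · push Not at hpoor
    obtain ⟨D₁, s₁, h₁, hY₁⟩ := exists_isDPAssignment_forall_notMem_Ypos hκ hind
    obtain ⟨D₂, s₂, h₂, w, hw, hw₂⟩ :=
      exists_isDPAssignment_of_deficient hκ hind hpoor hW hWY hdef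
    exact hY₁ w hw (huniq h₁ h₂ ▸ hw₂)

end Forward

/-- All DP-Nash subgraphs of `(G,κ)` have the same `D`-set if and only if
`X ∪ Z` is independent in `G` and property `O*` holds. -/
theorem stmt10 (G : SimpleGraph V) (κ : V → ℕ) (hκ : ∀ v, κ v ≤ deg G v)
    (hedge : ∀ u v, G.Adj u v → 0 < κ u ∨ 0 < κ v) :
    (∀ (D₁ P₁ : Finset V) (H₁ : SimpleGraph V) (D₂ P₂ : Finset V) (H₂ : SimpleGraph V),
        IsDPNash G κ D₁ P₁ H₁ → IsDPNash G κ D₂ P₂ H₂ → D₁ = D₂) ↔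
      ((∀ u ∈ XX G κ ∪ ZZ G κ, ∀ v ∈ XX G κ ∪ ZZ G κ, ¬ G.Adj u v) ∧
        ∀ W : Finset V, W.Nonempty → W ⊆ Ypos G κ → ∑ w ∈ W, κ w < (LL G κ W).card) := by
  constructor
  · intro h
    have huniq : UniqueDSet G κ := fun D₁ D₂ s₁ s₂ h₁ h₂ =>
      h _ _ _ _ _ _ (h₁.isDPNash hκ) (h₂.isDPNash hκ)
    have hind : ∀ u ∈ XX G κ ∪ ZZ G κ, ∀ v ∈ XX G κ ∪ ZZ G κ, ¬ G.Adj u v :=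
      fun u hu v hv => not_adj_of_uniqueDSet hκ hedge huniq hu hv
    exact ⟨hind, fun W hW hWY => sum_lt_card_LL_of_uniqueDSet hκ hind huniq hW hWY⟩
  · rintro ⟨hind, hO⟩ D₁ P₁ H₁ D₂ P₂ H₂ h₁ h₂
    rw [h₁.eq_XX_union_ZZ hκ hind hO, h₂.eq_XX_union_ZZ hκ hind hO]
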